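/- arXiv:1904.06055 — 5 statements merged into one kernel-verified Lean document; each statement's English description precedes it below -/
import Mathlib

section
/- Let p > 3 be a prime with p ≡ 3 (mod 4). Then 2^((p-3)/2) divides det[S(p)] (equivalently, the 2-adic valuation of det[S(p)] is at least (p-3)/2). -/
/-! Entries of `S(p)` are `±1`: for `p ≡ 3 (mod 4)`, `-1` is not a square mod `p`, so `j² + k²`
never vanishes mod `p` when `p ∤ j`. A `±1` matrix of size `n` has all rows congruent mod `2`;
subtracting the first row from the others and halving them shows `2^(n-1) ∣ det`. -/

theorem Matrix.two_pow_dvd_det_of_forall_eq_one_or_neg_one {ι : Type*} [Fintype ι]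
    [DecidableEq ι] (A : Matrix ι ι ℤ) (hA : ∀ i j, A i j = 1 ∨ A i j = -1) :
    (2 : ℤ) ^ (Fintype.card ι - 1) ∣ A.det := by
  rcases isEmpty_or_nonempty ι with hι | ⟨⟨i₀⟩⟩
  · simp
  let c : ι → ℤ := Function.update 1 i₀ 0
  let v : ι → ℤ := Function.update (fun _ => 2) i₀ 1
  let B : Matrix ι ι ℤ := Matrix.of fun i j => if i = i₀ then A i₀ j else (A i j - A i₀ j) / 2
  have hdet : A.det = (Matrix.of fun i j => v i * B i j).det := by
    refine Matrix.det_eq_of_forall_row_eq_smul_add_const c i₀ (by simp [c]) fun i j => ?_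
    by_cases hi : i = i₀
    · subst hi; simp [c, v, B]
    · simp only [c, v, B, Matrix.of_apply, Function.update_of_ne hi, if_neg hi]
      rcases hA i j with h₁ | h₁ <;> rcases hA i₀ j with h₂ | h₂ <;> rw [h₁, h₂] <;> norm_num
  have hv : ∏ i, v i = 2 ^ (Fintype.card ι - 1) := by
    rw [Finset.prod_update_of_mem (Finset.mem_univ i₀), Finset.prod_const, Finset.card_sdiff,
      Finset.card_univ]
    simp
  rw [hdet, Matrix.det_mul_column, hv]
  exact dvd_mul_right _ _

theorem legendreSym_sq_add_sq_eq_one_or_neg_one {p : ℕ} [Fact p.Prime] (hp : p % 4 = 3)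
    {a : ℤ} (b : ℤ) (ha : (a : ZMod p) ≠ 0) :
    legendreSym p (a ^ 2 + b ^ 2) = 1 ∨ legendreSym p (a ^ 2 + b ^ 2) = -1 := by
  refine legendreSym.eq_one_or_neg_one p fun h => ?_
  push_cast at h
  exact ZMod.mod_four_ne_three_of_sq_eq_neg_sq' (x := (b : ZMod p)) ha (by linear_combination h) hp

theorem stmt4_general (p : ℕ) [hp : Fact p.Prime] (hp4 : p % 4 = 3)
    (m : ℕ) (hm : m = (p - 1) / 2)
    (S : Matrix (Fin m) (Fin m) ℤ)
    (hS : S = Matrix.of fun (j k : Fin m) =>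
      legendreSym p ((((j : ℕ) : ℤ) + 1) ^ 2 + (((k : ℕ) : ℤ) + 1) ^ 2)) :
    (2 : ℤ) ^ ((p - 3) / 2) ∣ S.det := by
  have hentry : ∀ j k, S j k = 1 ∨ S j k = -1 := fun j k => by
    have hj : ((j : ℕ) + 1 : ℕ) < p := by omega
    have hj0 : ((((j : ℕ) : ℤ) + 1 : ℤ) : ZMod p) ≠ 0 := by
      exact_mod_cast (ZMod.natCast_eq_zero_iff _ _).not.mpr (Nat.not_dvd_of_pos_of_lt j.val.succ_pos hj)
    rw [hS]
    exact legendreSym_sq_add_sq_eq_one_or_neg_one hp4 _ hj0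
  have hsize : (p - 3) / 2 = Fintype.card (Fin m) - 1 := by simp only [Fintype.card_fin]; omega
  rw [hsize]
  exact S.two_pow_dvd_det_of_forall_eq_one_or_neg_one hentry

/-- For a prime `p > 3` with `p ≡ 3 (mod 4)`, `2^((p-3)/2)` divides
`det S(p)`, where `S(p)` is the matrix of Legendre symbols `((j²+k²)/p)` for
`1 ≤ j,k ≤ (p-1)/2`. -/
theorem stmt4 (p : ℕ) [hp : Fact p.Prime] (hp3 : 3 < p) (hp4 : p % 4 = 3)
    (m : ℕ) (hm : m = (p - 1) / 2)
    (S : Matrix (Fin m) (Fin m) ℤ)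
    (hS : S = Matrix.of fun (j k : Fin m) =>
      legendreSym p ((((j : ℕ) : ℤ) + 1) ^ 2 + (((k : ℕ) : ℤ) + 1) ^ 2)) :
    (2 : ℤ) ^ ((p - 3) / 2) ∣ S.det :=
  stmt4_general p (hp := hp) hp4 m hm S hS
end

section
/- Let p be a prime with p ≡ 1 (mod 4) and let Δ be a quadratic non-residue modulo p. Then det[S(Δ,p)] = 0. -/
section aux

variable {p : ℕ} [hp : Fact p.Prime]

private lemma aux_sum_affine (hp2 : p ≠ 2) (a b : ZMod p) (ha : a ≠ 0) :
    ∑ y : ZMod p, quadraticChar (ZMod p) (a * y + b) = 0 := by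
  have hchar : ringChar (ZMod p) ≠ 2 := by rw [ZMod.ringChar_zmod_n]; exact hp2
  calc ∑ y : ZMod p, quadraticChar (ZMod p) (a * y + b)
      = ∑ y : ZMod p, quadraticChar (ZMod p)
          (((Equiv.mulLeft₀ a ha).trans (Equiv.addRight b)) y) := by
        apply Finset.sum_congr rfl; intro y _; rfl
    _ = ∑ z : ZMod p, quadraticChar (ZMod p) z :=
        Equiv.sum_comp _ _
    _ = 0 := quadraticChar_sum_zero hchar

private lemma aux_key (hp2 : p ≠ 2) (D c : ZMod p) (hD : D ≠ 0) (hc : c ≠ 0) :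
    ∑ x : ZMod p, quadraticChar (ZMod p) (c + D * x ^ 2)
      = - quadraticChar (ZMod p) D := by
  classical
  have hchar : ringChar (ZMod p) ≠ 2 := by rw [ZMod.ringChar_zmod_n]; exact hp2
  set χ := quadraticChar (ZMod p) with hχ
  -- group by y = x²
  have h1 : ∑ x : ZMod p, χ (c + D * x ^ 2)
      = ∑ y : ZMod p, (χ y + 1) * χ (c + D * y) := by
    rw [← Finset.sum_fiberwise' Finset.univ (fun x : ZMod p => x ^ 2)
        (fun y => χ (c + D * y))]
    apply Finset.sum_congr rfl
    intro y _
    rw [Finset.sum_const, nsmul_eq_mul]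
    congr 1
    have h := quadraticChar_card_sqrts hchar y
    rw [← h]
    norm_cast
    rw [Set.toFinset_setOf]
  have h2 : ∑ y : ZMod p, χ (c + D * y) = 0 := by
    have := aux_sum_affine hp2 D c hD
    rw [hχ]; simpa only [add_comm] using this
  have h3 : ∑ y : ZMod p, χ y * χ (c + D * y) = - χ D := by
    have point : ∀ y : ZMod p, χ y * χ (c + D * y)
        = χ (c * y⁻¹ + D) - (if y = 0 then χ D else 0) := by
      intro y
      by_cases hy : y = 0
      · simp [hy, hχ]
      · have h4 : χ y * χ (c + D * y) = χ (y ^ 2) * χ (c * y⁻¹ + D) := by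
          rw [← map_mul, ← map_mul]
          congr 1
          field_simp
        rw [h4, quadraticChar_sq_one' hy, one_mul]
        simp [hy]
    rw [Finset.sum_congr rfl fun y _ => point y, Finset.sum_sub_distrib]
    have h5 : ∑ y : ZMod p, χ (c * y⁻¹ + D) = 0 := by
      have hinv : ∑ y : ZMod p, χ (c * y⁻¹ + D)
          = ∑ y : ZMod p, χ (c * y + D) :=
        Equiv.sum_comp (Equiv.inv (ZMod p)) (fun y => χ (c * y + D))
      rw [hinv]
      exact aux_sum_affine hp2 c D hc
    rw [h5, Finset.sum_ite_eq' Finset.univ (0 : ZMod p) (fun _ => χ D)]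
    simp
  calc ∑ x : ZMod p, χ (c + D * x ^ 2)
      = ∑ y : ZMod p, (χ y * χ (c + D * y) + χ (c + D * y)) := by
        rw [h1]; apply Finset.sum_congr rfl; intro y _; ring
    _ = - χ D := by rw [Finset.sum_add_distrib, h2, h3, add_zero]

private lemma aux_sum_zmod (f : ZMod p → ℤ) :
    ∑ x : ZMod p, f x = ∑ i ∈ Finset.range p, f (i : ZMod p) := by
  haveI : NeZero p := ⟨hp.out.ne_zero⟩
  refine (Finset.sum_nbij' (fun i => ((i : ℕ) : ZMod p)) (fun x => (ZMod.val x : ℕ))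
    ?_ ?_ ?_ ?_ ?_).symm
  · intro i _; exact Finset.mem_univ _
  · intro x _; exact Finset.mem_range.mpr (ZMod.val_lt x)
  · intro i hi; exact ZMod.val_cast_of_lt (Finset.mem_range.mp hi)
  · intro x _; exact ZMod.natCast_rightInverse x
  · intro i _; rfl

/-- The row sums vanish. -/
private lemma aux_row_sum (hp2 : p ≠ 2) {m : ℕ} (hpm : p = 2 * m + 1)
    (D c : ZMod p) (hD : quadraticChar (ZMod p) D = -1) (hc : c ≠ 0)
    (hcsq : IsSquare c) :
    ∑ k ∈ Finset.range m, quadraticChar (ZMod p) (c + D * ((k : ZMod p) + 1) ^ 2) = 0 := by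
  classical
  set χ := quadraticChar (ZMod p) with hχ
  set g : ZMod p → ℤ := fun x => χ (c + D * x ^ 2) with hg
  have hD0 : D ≠ 0 := by
    intro h; rw [h] at hD; simp [hχ] at hD
  have htot : ∑ x : ZMod p, g x = 1 := by
    rw [hg]
    calc ∑ x : ZMod p, χ (c + D * x ^ 2) = - χ D := aux_key hp2 D c hD0 hc
      _ = 1 := by rw [hD]; norm_num
  have hg0 : g 0 = 1 := by
    simp only [hg]
    rw [zero_pow (by norm_num), mul_zero, add_zero]
    exact (quadraticChar_one_iff_isSquare hc).mpr hcsq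
  have heven : ∀ x : ZMod p, g (-x) = g x := by
    intro x; simp only [hg, neg_sq]
  -- split the sum over range p
  have hsplit : ∑ x : ZMod p, g x
      = (∑ i ∈ Finset.range m, g ((i : ZMod p) + 1)) * 2 + g 0 := by
    rw [aux_sum_zmod g,
      show Finset.range p = Finset.range (2 * m + 1) from by rw [← hpm],
      Finset.sum_range_succ' (fun i => g (i : ZMod p)) (2 * m)]
    simp only [Nat.cast_zero]
    congr 1
    have hIco : ∑ i ∈ Finset.range (2 * m), g ((i : ℕ) + 1 : ℕ)
        = ∑ i ∈ Finset.Ico 0 m, g ((i + 1 : ℕ))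
          + ∑ i ∈ Finset.Ico m (2 * m), g ((i + 1 : ℕ)) := by
      rw [Finset.sum_Ico_consecutive _ (Nat.zero_le m) (by omega)]
      rw [Finset.range_eq_Ico]
    have hsecond : ∑ i ∈ Finset.Ico m (2 * m), g ((i + 1 : ℕ))
        = ∑ i ∈ Finset.range m, g ((m + i + 1 : ℕ)) := by
      rw [Finset.sum_Ico_eq_sum_range]
      have h2m : 2 * m - m = m := by omega
      rw [h2m]
    have hneg : ∀ i ∈ Finset.range m, g ((m + i + 1 : ℕ)) = g ((m - i : ℕ)) := by
      intro i hi
      have him : i < m := Finset.mem_range.mp hi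
      have hcast : ((m + i + 1 : ℕ) : ZMod p) = - ((m - i : ℕ) : ZMod p) := by
        have : ((m + i + 1 : ℕ) : ZMod p) + ((m - i : ℕ) : ZMod p) = 0 := by
          rw [← Nat.cast_add]
          have : m + i + 1 + (m - i) = p := by omega
          rw [this, ZMod.natCast_self]
        linear_combination this
      rw [hcast, heven]
    have hreflect : ∑ i ∈ Finset.range m, g ((m - i : ℕ))
        = ∑ i ∈ Finset.range m, g ((i + 1 : ℕ)) := by
      have := Finset.sum_range_reflect (fun j => g ((j + 1 : ℕ))) m
      rw [← this]
      apply Finset.sum_congr rfl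
      intro i hi
      have him : i < m := Finset.mem_range.mp hi
      have heq : m - 1 - i + 1 = m - i := by omega
      rw [heq]
    calc ∑ i ∈ Finset.range (2 * m), g ((i + 1 : ℕ) : ZMod p)
        = ∑ i ∈ Finset.range m, g ((i + 1 : ℕ))
          + ∑ i ∈ Finset.range m, g ((m + i + 1 : ℕ)) := by
          rw [hIco, hsecond, Finset.range_eq_Ico]
      _ = ∑ i ∈ Finset.range m, g ((i + 1 : ℕ))
          + ∑ i ∈ Finset.range m, g ((i + 1 : ℕ)) := by
          rw [Finset.sum_congr rfl hneg, hreflect]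
      _ = (∑ i ∈ Finset.range m, g ((i : ZMod p) + 1)) * 2 := by
          rw [mul_two]
          congr 1 <;> (apply Finset.sum_congr rfl; intro i _; congr 1; push_cast; ring)
  have h6 : (∑ i ∈ Finset.range m, g ((i : ZMod p) + 1)) * 2 + g 0 = 1 := by
    rw [← hsplit]; exact htot
  rw [hg0] at h6
  have hzero : ∑ i ∈ Finset.range m, g ((i : ZMod p) + 1) = 0 := by omega
  simpa only [hg] using hzero

end aux

/-- For a prime `p ≡ 1 (mod 4)` and `Δ` a quadratic non-residue mod `p`,
`det S(Δ,p) = 0`, where `S(Δ,p)` has entries the Legendre symbols `((j²+Δk²)/p)` for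
`1 ≤ j,k ≤ (p-1)/2`. -/
theorem stmt7 (p : ℕ) [hp : Fact p.Prime] (hp4 : p % 4 = 1)
    (Δ : ℤ) (hΔ : ¬ IsSquare (Δ : ZMod p))
    (m : ℕ) (hm : m = (p - 1) / 2)
    (S : Matrix (Fin m) (Fin m) ℤ)
    (hS : S = Matrix.of fun (j k : Fin m) =>
      legendreSym p ((((j : ℕ) : ℤ) + 1) ^ 2 + Δ * (((k : ℕ) : ℤ) + 1) ^ 2)) :
    S.det = 0 := by
  have hp2 : p ≠ 2 := by omega
  have hp5 : 5 ≤ p := by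
    have := hp.out.two_le
    omega
  have hpm : p = 2 * m + 1 := by omega
  have hm0 : 0 < m := by omega
  haveI : NeZero m := ⟨by omega⟩
  -- the all-ones vector is in the kernel
  rw [← Matrix.exists_mulVec_eq_zero_iff]
  refine ⟨fun _ => 1, ?_, ?_⟩
  · intro h
    have := congrFun h ⟨0, hm0⟩
    simp at this
  · funext j
    have hrow : ∀ k : Fin m, S j k
        = quadraticChar (ZMod p)
            ((((j : ℕ) : ZMod p) + 1) ^ 2 + (Δ : ZMod p) * (((k : ℕ) : ZMod p) + 1) ^ 2) := by
      intro k
      rw [hS]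
      show legendreSym p _ = _
      rw [legendreSym]
      congr 1
      push_cast
      ring
    have hc : (((j : ℕ) : ZMod p) + 1) ^ 2 ≠ 0 := by
      apply pow_ne_zero
      intro h
      have : (((j : ℕ) + 1 : ℕ) : ZMod p) = 0 := by push_cast; exact h
      rw [ZMod.natCast_eq_zero_iff] at this
      have hj : (j : ℕ) < m := j.isLt
      have := Nat.le_of_dvd (by omega) this
      omega
    have hcsq : IsSquare ((((j : ℕ) : ZMod p) + 1) ^ 2) := ⟨_, sq _⟩
    have hD : quadraticChar (ZMod p) ((Δ : ZMod p)) = -1 :=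
      (quadraticChar_neg_one_iff_not_isSquare).mpr hΔ
    have hrs := aux_row_sum hp2 hpm ((Δ : ZMod p)) ((((j : ℕ) : ZMod p) + 1) ^ 2)
      hD hc hcsq
    simp only [Matrix.mulVec, dotProduct, mul_one, Pi.zero_apply]
    calc ∑ k : Fin m, S j k
        = ∑ k ∈ Finset.range m, quadraticChar (ZMod p)
            ((((j : ℕ) : ZMod p) + 1) ^ 2 + (Δ : ZMod p) * (((k : ℕ) : ZMod p) + 1) ^ 2) := by
          rw [Finset.sum_congr rfl fun k _ => hrow k]
          exact Fin.sum_univ_eq_sum_range (fun k : ℕ => quadraticChar (ZMod p)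
            ((((j : ℕ) : ZMod p) + 1) ^ 2 + (Δ : ZMod p) * ((k : ZMod p) + 1) ^ 2)) m
      _ = 0 := hrs
end

section
/- Let p be an odd prime, m = (p-1)/2, and let a be an integer with gcd(a,p) = 1. Let τ_a be the permutation of the set {1² mod p, 2² mod p, ..., m² mod p} of nonzero quadratic residues modulo p given by x ↦ a²x mod p. Then the sign of τ_a equals 1 if p ≡ 3 (mod 4), and equals the Legendre symbol (a/p) if p ≡ 1 (mod 4). -/
section Aux

variable {p : ℕ} [hp : Fact p.Prime]

private lemma stmt8_mem_aux (u : (ZMod p)ˣ) (x : ZMod p) :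
    (IsSquare x ∧ x ≠ 0) ↔
      (IsSquare ((u : ZMod p) ^ 2 * x) ∧ (u : ZMod p) ^ 2 * x ≠ 0) := by
  have hc : (u : ZMod p) ≠ 0 := u.ne_zero
  constructor
  · rintro ⟨⟨r, rfl⟩, hx⟩
    exact ⟨⟨(u : ZMod p) * r, by ring⟩, mul_ne_zero (pow_ne_zero _ hc) hx⟩
  · rintro ⟨⟨r, hr⟩, hx⟩
    have hx0 : x ≠ 0 := by
      intro h; apply hx; rw [h, mul_zero]
    refine ⟨⟨(u : ZMod p)⁻¹ * r, ?_⟩, hx0⟩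
    field_simp
    linear_combination hr

/-- multiplication by `u ^ 2` as a permutation of the nonzero squares. -/
private def stmt8_sqp (u : (ZMod p)ˣ) :
    Equiv.Perm {x : ZMod p // IsSquare x ∧ x ≠ 0} :=
  (Equiv.mulLeft₀ ((u : ZMod p) ^ 2) (pow_ne_zero 2 u.ne_zero)).subtypeEquiv
    fun x => stmt8_mem_aux u x

@[simp] private lemma stmt8_sqp_apply (u : (ZMod p)ˣ)
    (x : {x : ZMod p // IsSquare x ∧ x ≠ 0}) :
    ((stmt8_sqp u x : {x : ZMod p // IsSquare x ∧ x ≠ 0}) : ZMod p) =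
      (u : ZMod p) ^ 2 * (x : ZMod p) := rfl

private lemma stmt8_sqp_pow (u : (ZMod p)ˣ) (n : ℕ)
    (x : {x : ZMod p // IsSquare x ∧ x ≠ 0}) :
    (((stmt8_sqp u ^ n) x : {x : ZMod p // IsSquare x ∧ x ≠ 0}) : ZMod p) =
      (u : ZMod p) ^ (2 * n) * (x : ZMod p) := by
  induction n with
  | zero => simp
  | succ n ih =>
    rw [pow_succ', Equiv.Perm.mul_apply, stmt8_sqp_apply, ih]
    ring

private lemma stmt8_sqp_pow_eq (u : (ZMod p)ˣ) (n : ℕ) :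
    stmt8_sqp (u ^ n) = stmt8_sqp u ^ n := by
  ext x
  rw [stmt8_sqp_pow]
  simp [stmt8_sqp_apply, mul_pow, ← pow_mul, mul_comm 2 n]

end Aux

/-- For an odd prime `p` and an integer `a` coprime to `p`, the permutation
`τ_a : x ↦ a²x` of the set of nonzero quadratic residues mod `p` has sign `1` when
`p ≡ 3 (mod 4)` and sign equal to the Legendre symbol `(a/p)` when `p ≡ 1 (mod 4)`. -/
theorem stmt8 (p : ℕ) [hp : Fact p.Prime] (hodd : Odd p)
    (a : ℤ) (ha : Int.gcd a p = 1)
    (τ : Equiv.Perm {x : ZMod p // IsSquare x ∧ x ≠ 0})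
    (hτ : ∀ x : {x : ZMod p // IsSquare x ∧ x ≠ 0},
      ((τ x : {x : ZMod p // IsSquare x ∧ x ≠ 0}) : ZMod p) = (a : ZMod p) ^ 2 * (x : ZMod p)) :
    (p % 4 = 3 → (Equiv.Perm.sign τ : ℤ) = 1) ∧
    (p % 4 = 1 → (Equiv.Perm.sign τ : ℤ) = legendreSym p a) := by
  have hp2 : 2 ≤ p := hp.out.two_le
  have hodd2 : p % 2 = 1 := Nat.odd_iff.mp hodd
  -- `a` is a unit mod `p`
  have hA : (a : ZMod p) ≠ 0 := by
    rw [Ne, ZMod.intCast_zmod_eq_zero_iff_dvd]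
    intro hdvd
    have h1 : (p : ℤ) ∣ (Int.gcd a p : ℤ) := Int.dvd_coe_gcd hdvd dvd_rfl
    rw [ha] at h1
    have := Int.le_of_dvd one_pos h1
    omega
  have hu : IsUnit (a : ZMod p) := Ne.isUnit hA
  set u : (ZMod p)ˣ := hu.unit with hu_def
  have huv : (u : ZMod p) = (a : ZMod p) := hu.unit_spec
  have hτ_eq : τ = stmt8_sqp u := by
    apply Equiv.ext
    intro x
    apply Subtype.ext
    rw [hτ x, stmt8_sqp_apply, huv]
  -- a generator of the unit group
  obtain ⟨g, hg⟩ := IsCyclic.exists_generator (α := (ZMod p)ˣ)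
  have hgord : orderOf g = p - 1 := by
    rw [orderOf_eq_card_of_forall_mem_zpowers hg, Nat.card_eq_fintype_card,
      ZMod.card_units_eq_totient, Nat.totient_prime hp.out]
  obtain ⟨k, hk'⟩ : u ∈ Submonoid.powers g := mem_powers_iff_mem_zpowers.mpr (hg u)
  have hk : g ^ k = u := hk'
  by_cases hg2 : g ^ 2 = 1
  · -- degenerate case: p = 3
    have hple : p ≤ 3 := by
      have := Nat.le_of_dvd (by norm_num) (orderOf_dvd_of_pow_eq_one hg2)
      omega
    have hu2 : (u : ZMod p) ^ 2 = 1 := by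
      have : u ^ 2 = 1 := by
        rw [← hk, ← pow_mul, mul_comm, pow_mul, hg2, one_pow]
      calc (u : ZMod p) ^ 2 = ((u ^ 2 : (ZMod p)ˣ) : ZMod p) := by push_cast; ring
        _ = 1 := by rw [this]; rfl
    have hτ1 : τ = 1 := by
      apply Equiv.ext
      intro x
      apply Subtype.ext
      rw [hτ x, ← huv, hu2, one_mul]
      rfl
    exact ⟨fun _ => by rw [hτ1]; simp, fun h1 => by omega⟩
  · -- main case
    set σ := stmt8_sqp g with hσ_def
    -- σ is a cycle
    have hcyc : σ.IsCycle := by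
      refine ⟨⟨1, IsSquare.one, one_ne_zero⟩, ?_, ?_⟩
      · intro h
        apply hg2
        apply Units.ext
        have h' := congrArg Subtype.val h
        rw [hσ_def, stmt8_sqp_apply] at h'
        simpa [Units.val_pow_eq_pow_val] using h'
      · intro y _
        obtain ⟨r, hr⟩ := y.2.1
        have hr0 : r ≠ 0 := by
          intro h
          exact y.2.2 (by rw [hr, h, mul_zero])
        have hru : IsUnit r := Ne.isUnit hr0
        obtain ⟨j, hj'⟩ : hru.unit ∈ Submonoid.powers g :=
          mem_powers_iff_mem_zpowers.mpr (hg _)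
        have hj : g ^ j = hru.unit := hj'
        refine ⟨(j : ℤ), ?_⟩
        rw [zpow_natCast]
        apply Subtype.ext
        rw [stmt8_sqp_pow]
        have hcr : (hru.unit : ZMod p) = r := hru.unit_spec
        have : (g : ZMod p) ^ (2 * j) = r * r := by
          have h1 : ((g ^ j : (ZMod p)ˣ) : ZMod p) = r := by rw [hj, hcr]
          calc (g : ZMod p) ^ (2 * j) = ((g ^ j : (ZMod p)ˣ) : ZMod p) ^ 2 := by
                push_cast; rw [← pow_mul, mul_comm]
            _ = r * r := by rw [h1]; ring
        rw [this]
        simp [hr]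
    -- the order of σ
    have hord2 : orderOf (g ^ 2) = (p - 1) / 2 := by
      rw [orderOf_pow, hgord, Nat.gcd_eq_right (by omega : 2 ∣ p - 1)]
    have hords : orderOf σ = (p - 1) / 2 := by
      rw [← hord2]
      apply Nat.dvd_antisymm
      · apply orderOf_dvd_of_pow_eq_one
        apply Equiv.ext
        intro x
        apply Subtype.ext
        rw [stmt8_sqp_pow]
        have h1 : (g : ZMod p) ^ (2 * orderOf (g ^ 2)) = 1 := by
          rw [pow_mul]
          exact congrArg Units.val (pow_orderOf_eq_one (g ^ 2))
        rw [h1, one_mul]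
        rfl
      · apply orderOf_dvd_of_pow_eq_one
        have h1 := congrArg
          (fun f : Equiv.Perm {x : ZMod p // IsSquare x ∧ x ≠ 0} =>
            ((f ⟨1, IsSquare.one, one_ne_zero⟩ : {x : ZMod p // IsSquare x ∧ x ≠ 0}) : ZMod p))
          (pow_orderOf_eq_one σ)
        simp only [hσ_def, stmt8_sqp_pow, Equiv.Perm.one_apply, mul_one] at h1
        apply Units.ext
        push_cast
        rw [← pow_mul]
        exact h1
    have hsupp : σ.support.card = (p - 1) / 2 := by rw [← hcyc.orderOf, hords]
    have hsign : Equiv.Perm.sign σ = -(-1) ^ ((p - 1) / 2) := by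
      rw [hcyc.sign, hsupp]
    have hτs : τ = σ ^ k := by rw [hτ_eq, ← hk, stmt8_sqp_pow_eq]
    constructor
    · intro h3
      have hm : Odd ((p - 1) / 2) := Nat.odd_iff.mpr (by omega)
      have hσs : Equiv.Perm.sign σ = 1 := by rw [hsign, hm.neg_one_pow, neg_neg]
      rw [hτs, map_pow, hσs, one_pow]
      rfl
    · intro h1
      have hp5 : 5 ≤ p := by
        rcases Nat.lt_or_ge p 5 with h | h
        · interval_cases p <;> simp_all
        · exact h
      have hm : Even ((p - 1) / 2) := Nat.even_iff.mpr (by omega)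
      have hσs : Equiv.Perm.sign σ = -1 := by rw [hsign, hm.neg_one_pow]
      -- g is not a square
      have hgns : ¬ IsSquare (g : ZMod p) := by
        intro hsq
        have hchar : ringChar (ZMod p) ≠ 2 := by
          rw [ZMod.ringChar_zmod_n]; omega
        rw [FiniteField.isSquare_iff hchar g.ne_zero, ZMod.card] at hsq
        have : (p - 1) ∣ p / 2 := by
          rw [← hgord]
          apply orderOf_dvd_of_pow_eq_one
          apply Units.ext
          push_cast
          exact hsq
        have := Nat.le_of_dvd (by omega) this
        omega
      have hχg : quadraticChar (ZMod p) (g : ZMod p) = -1 :=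
        quadraticChar_neg_one_iff_not_isSquare.mpr hgns
      have hleg : legendreSym p a = (-1 : ℤ) ^ k := by
        rw [legendreSym, ← huv, ← hk]
        push_cast
        rw [map_pow, hχg]
      rw [hτs, map_pow, hσs, hleg]
      push_cast
      ring
end

section
/- Let p be a prime with p ≡ 3 (mod 4). Then there exist half-integers u_p, v_p (i.e., 2u_p, 2v_p ∈ ℤ) such that det[D_p] = u_p + v_p·i·√p. -/
/-!
Write `ψ a = ζ ^ a.val`, so that `det D_p = ∑ₐ c a • ψ a` with integer coefficients `c a` counting
permutations with sign by the residue of `∑ⱼ j² σ(j)²`. Replacing `ψ` by `ψ (s² ·)` permutes the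
rows of `D_p` by `j ↦ ±s j`; this permutation has odd order dividing `(p - 1) / 2` when
`p ≡ 3 [MOD 4]`, hence is even, so the determinant does not change. Since the only `ℚ`-linear
relation among the `ψ a` is `∑ₐ ψ a = 0`, the coefficients `c` are constant on the square classes,
which makes `2 det D_p` an integer combination of `1` and the quadratic Gauss sum `g`.
Finally `g² = χ(-1) p = -p`, so `g = ±i√p`.
-/

open Finset Polynomial

namespace AddChar

lemma map_sum_eq_prod {A M ι : Type*} [AddCommMonoid A] [CommMonoid M] (ψ : AddChar A M)
    (s : Finset ι) (g : ι → A) : ψ (∑ i ∈ s, g i) = ∏ i ∈ s, ψ (g i) := by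
  induction s using Finset.cons_induction <;> simp [*, map_add_eq_mul]

variable {n : ℕ} [NeZero n] {M : Type*} [CommMonoid M]

lemma apply_eq_pow_val (ψ : AddChar (ZMod n) M) (a : ZMod n) : ψ a = ψ 1 ^ a.val := by
  rw [← map_nsmul_eq_pow, nsmul_one, ZMod.natCast_zmod_val]

lemma IsPrimitive.isPrimitiveRoot_apply_one {ψ : AddChar (ZMod n) M} (hψ : ψ.IsPrimitive) :
    IsPrimitiveRoot (ψ 1) n := by
  refine IsPrimitiveRoot.mk_of_lt _ (NeZero.pos n) ?_ fun l hl0 hln h => ?_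
  · rw [← map_nsmul_eq_pow, nsmul_one, ZMod.natCast_self, map_zero_eq_one]
  · rw [← map_nsmul_eq_pow, nsmul_one, hψ.zmod_char_eq_one_iff, ZMod.natCast_eq_zero_iff] at h
    exact absurd (Nat.le_of_dvd hl0 h) (by omega)

end AddChar

lemma Polynomial.coeff_sum_C_mul_X_pow_val {n : ℕ} [NeZero n] {R : Type*} [Semiring R]
    (c : ZMod n → R) (a : ZMod n) : (∑ b, C (c b) * X ^ b.val).coeff a.val = c a := by
  simp only [finsetSum_coeff, coeff_C_mul_X_pow, ZMod.val_injective n |>.eq_iff,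
    Finset.sum_ite_eq, Finset.mem_univ, if_true]

lemma Polynomial.coeff_cyclotomic_prime_of_lt {p k : ℕ} [Fact p.Prime] (R : Type*) [Ring R]
    (hk : k < p) : (cyclotomic p R).coeff k = 1 := by
  simp [cyclotomic_prime, coeff_X_pow, hk]

/-- The minimal polynomial of `ψ 1` over `ℚ` is `Φ_p = 1 + X + ⋯ + X ^ (p - 1)`, so the only
rational relation among the values of `ψ` is `∑ₐ ψ a = 0`. -/
lemma AddChar.IsPrimitive.eq_of_sum_mul_eq_zero {p : ℕ} [Fact p.Prime] {K : Type*} [Field K]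
    [CharZero K] {ψ : AddChar (ZMod p) K} (hψ : ψ.IsPrimitive) (c : ZMod p → ℚ)
    (h : ∑ a, (c a : K) * ψ a = 0) (a : ZMod p) : c a = c 0 := by
  set R : ℚ[X] := ∑ b, C (c b) * X ^ b.val with hRdef
  have hR : aeval (ψ 1) R = 0 := by
    simpa [R, ← ψ.apply_eq_pow_val] using h
  obtain ⟨q, hq⟩ : cyclotomic p ℚ ∣ R := by
    rw [cyclotomic_eq_minpoly_rat hψ.isPrimitiveRoot_apply_one (NeZero.pos p)]
    exact minpoly.dvd ℚ _ hR
  have hRdeg : R.natDegree ≤ p - 1 := by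
    refine natDegree_sum_le_of_forall_le _ _ fun b _ => (natDegree_C_mul_X_pow_le _ _).trans ?_
    have := b.val_lt; omega
  obtain ⟨k, rfl⟩ : ∃ k, q = C k := by
    rcases eq_or_ne q 0 with rfl | hq0
    · exact ⟨0, C_0.symm⟩
    refine ⟨q.coeff 0, eq_C_of_natDegree_eq_zero ?_⟩
    have := natDegree_mul (cyclotomic_ne_zero p ℚ) hq0
    rw [← hq, natDegree_cyclotomic, Nat.totient_prime Fact.out] at this
    omega
  have hcoeff (b : ZMod p) : c b = k := by
    rw [← coeff_sum_C_mul_X_pow_val c b, ← hRdef, hq, coeff_mul_C,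
      coeff_cyclotomic_prime_of_lt ℚ b.val_lt, one_mul]
  rw [hcoeff, hcoeff]

lemma AddChar.IsPrimitive.apply_mul_eq_of_sum_mulShift_eq {p : ℕ} [Fact p.Prime] {K : Type*}
    [Field K] [CharZero K] {ψ : AddChar (ZMod p) K} (hψ : ψ.IsPrimitive) (c : ZMod p → ℤ)
    {t : ZMod p} (ht : t ≠ 0) (h : ∑ a, (c a : K) * ψ.mulShift t a = ∑ a, (c a : K) * ψ a)
    (a : ZMod p) : c (t * a) = c a := by
  have hshift : ∑ a, (c a : K) * ψ.mulShift t a = ∑ a, (c (t⁻¹ * a) : K) * ψ a :=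
    Fintype.sum_equiv (Equiv.mulLeft₀ t ht) _ _ fun b => by
      simp [AddChar.mulShift_apply, inv_mul_cancel_left₀ ht]
  have hrel : ∑ b, (((c (t⁻¹ * b) - c b : ℤ) : ℚ) : K) * ψ b = 0 := by
    push_cast
    simp only [sub_mul, sum_sub_distrib, ← hshift, h, sub_self]
  have := hψ.eq_of_sum_mul_eq_zero _ hrel (t * a)
  simpa [inv_mul_cancel_left₀ ht, sub_eq_zero, eq_comm] using this

section QuadraticCharSums

variable {F R : Type*} [Field F] [Fintype F] [DecidableEq F] [CommRing R] [IsDomain R]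

lemma apply_eq_of_quadraticChar_eq (c : F → ℤ) (hc : ∀ s a, s ≠ 0 → c (s ^ 2 * a) = c a) {a b : F}
    (ha : a ≠ 0) (hab : quadraticChar F a = quadraticChar F b) : c a = c b := by
  have hb : b ≠ 0 := by
    rintro rfl
    rw [quadraticChar_zero, quadraticChar_eq_zero_iff] at hab
    exact ha hab
  have hsq : IsSquare (a / b) := by
    rw [← quadraticChar_one_iff_isSquare (div_ne_zero ha hb)]
    have hmul : quadraticChar F (a / b) * quadraticChar F b = 1 * quadraticChar F b := by
      rw [← map_mul, div_mul_cancel₀ a hb, hab, one_mul]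
    exact mul_right_cancel₀ (quadraticChar_eq_zero_iff.not.mpr hb) hmul
  obtain ⟨s, hs⟩ := hsq
  have hs0 : s ≠ 0 := by rintro rfl; simp [ha, hb] at hs
  rw [← hc s b hs0, sq, ← hs, div_mul_cancel₀ a hb]

lemma exists_two_mul_sum_eq_add_mul_gaussSum (hF : ringChar F ≠ 2) {ψ : AddChar F R}
    (hψ : ψ ≠ 1) (c : F → ℤ) (hc : ∀ s a, s ≠ 0 → c (s ^ 2 * a) = c a) :
    ∃ x y : ℤ, 2 * ∑ a, (c a : R) * ψ a =
      x + y * gaussSum ((quadraticChar F).ringHomComp (Int.castRingHom R)) ψ := by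
  obtain ⟨n, hn⟩ := FiniteField.exists_nonsquare hF
  have hn0 : n ≠ 0 := by rintro rfl; exact hn (IsSquare.zero)
  have hχn : quadraticChar F n = -1 := quadraticChar_neg_one_iff_not_isSquare.mpr hn
  have hcoeff (a : F) : 2 * c a = (c 1 + c n) + (c 1 - c n) * quadraticChar F a +
      if a = 0 then 2 * c 0 - c 1 - c n else 0 := by
    rcases eq_or_ne a 0 with rfl | ha
    · simp
    rw [if_neg ha]
    rcases quadraticChar_dichotomy ha with hχa | hχa
    · rw [hχa, apply_eq_of_quadraticChar_eq c hc ha (hχa.trans (map_one _).symm)]; ring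
    · rw [hχa, apply_eq_of_quadraticChar_eq c hc ha (hχa.trans hχn.symm)]; ring
  refine ⟨2 * c 0 - c 1 - c n, c 1 - c n, ?_⟩
  have hsum : ∑ a, ψ a = 0 := by
    rw [AddChar.sum_eq_ite, if_neg (show ψ ≠ 0 from hψ)]
  set χ := (quadraticChar F).ringHomComp (Int.castRingHom R)
  calc 2 * ∑ a, (c a : R) * ψ a
      = ∑ a, (((c 1 + c n : ℤ) : R) * ψ a + ((c 1 - c n : ℤ) : R) * (χ a * ψ a) +
          if a = 0 then ((2 * c 0 - c 1 - c n : ℤ) : R) else 0) := by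
        rw [mul_sum]
        refine sum_congr rfl fun a _ => ?_
        rcases eq_or_ne a 0 with rfl | ha
        · simp [χ]
        have := congrArg (Int.cast (R := R)) (hcoeff a)
        push_cast [if_neg ha] at this ⊢
        simp only [χ, MulChar.ringHomComp_apply, eq_intCast]
        linear_combination ψ a * this
    _ = _ := by
        rw [sum_add_distrib, sum_add_distrib, ← mul_sum, ← mul_sum, hsum, ← gaussSum,
          sum_ite_eq']
        simp [add_comm]

lemma gaussSum_quadraticChar_sq_of_card_mod_four_eq_three [CharZero R]
    (hF : Fintype.card F % 4 = 3) {ψ : AddChar F R} (hψ : ψ.IsPrimitive) :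
    gaussSum ((quadraticChar F).ringHomComp (Int.castRingHom R)) ψ ^ 2 = -(Fintype.card F : R) := by
  have hF2 : ringChar F ≠ 2 := by
    rw [Ne, FiniteField.even_card_iff_char_two]; omega
  rw [gaussSum_sq ((MulChar.ringHomComp_ne_one_iff (RingHom.injective_int _)).mpr
      (quadraticChar_ne_one hF2)) ((quadraticChar_isQuadratic F).comp _) hψ,
    MulChar.ringHomComp_apply, quadraticChar_neg_one hF2, ZMod.χ₄_nat_three_mod_four hF]
  simp

end QuadraticCharSums

lemma Complex.exists_intCast_mul_I_mul_sqrt_of_sq_eq_neg {z : ℂ} {r : ℝ} (hr : 0 ≤ r)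
    (h : z ^ 2 = -r) : ∃ e : ℤ, z = e * (I * Real.sqrt r) := by
  have hsq : z ^ 2 = (I * Real.sqrt r) ^ 2 := by
    rw [h, mul_pow, I_sq, ← ofReal_pow, Real.sq_sqrt hr, neg_one_mul]
  rcases sq_eq_sq_iff_eq_or_eq_neg.mp hsq with h | h
  exacts [⟨1, by simp [h]⟩, ⟨-1, by simp [h]⟩]

namespace ZMod

variable {n : ℕ} [NeZero n]

/-- `Fin (n / 2 + 1)` stands for `ZMod n` modulo `±1`, and `absMul s` is multiplication by `s`
on it. -/
def absMul (s : ZMod n) (j : Fin (n / 2 + 1)) : Fin (n / 2 + 1) :=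
  ⟨(s * (j : ℕ)).valMinAbs.natAbs, Nat.lt_succ_of_le (natAbs_valMinAbs_le _)⟩

lemma natCast_absMul (s : ZMod n) (j : Fin (n / 2 + 1)) :
    ((absMul s j : ℕ) : ZMod n) = s * (j : ℕ) ∨ ((absMul s j : ℕ) : ZMod n) = -(s * (j : ℕ)) := by
  rw [absMul, natCast_natAbs_valMinAbs]
  split_ifs
  exacts [.inl rfl, .inr rfl]

lemma absMul_absMul (s t : ZMod n) (j : Fin (n / 2 + 1)) :
    absMul s (absMul t j) = absMul (s * t) j := by
  refine Fin.ext (natAbs_valMinAbs_eq_natAbs_valMinAbs.mpr ?_)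
  rcases natCast_absMul t j with h | h <;> rw [h, mul_assoc]
  exacts [.inl rfl, .inr (mul_neg _ _)]

lemma absMul_one (j : Fin (n / 2 + 1)) : absMul 1 j = j :=
  Fin.ext <| by simp [absMul, valMinAbs_natCast_of_le_half (Nat.lt_succ_iff.mp j.isLt)]

lemma absMul_neg (s : ZMod n) (j : Fin (n / 2 + 1)) : absMul (-s) j = absMul s j :=
  Fin.ext <| by simp [absMul, neg_mul]

def absMulHom : (ZMod n)ˣ →* Equiv.Perm (Fin (n / 2 + 1)) where
  toFun s :=
    { toFun := absMul s
      invFun := absMul ↑s⁻¹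
      left_inv j := by simp [absMul_absMul, absMul_one]
      right_inv j := by simp [absMul_absMul, absMul_one] }
  map_one' := Equiv.ext absMul_one
  map_mul' s t := Equiv.ext fun j => (absMul_absMul _ _ j).symm

lemma absMulHom_apply (s : (ZMod n)ˣ) (j : Fin (n / 2 + 1)) : absMulHom s j = absMul s j := rfl

lemma sign_absMulHom {p : ℕ} [Fact p.Prime] (hp : p % 4 = 3) (s : (ZMod p)ˣ) :
    Equiv.Perm.sign (absMulHom s) = 1 := by
  -- by Euler's criterion `s ^ (p / 2) = ±1`, and `p / 2` is odd
  have hodd : p / 2 % 2 = 1 := by omega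
  have hpow : absMulHom s ^ (p / 2) = 1 := by
    refine Equiv.ext fun j => ?_
    rw [← map_pow, absMulHom_apply, Units.val_pow_eq_pow_val]
    rcases pow_div_two_eq_neg_one_or_one p s.ne_zero with h | h
    · simp [h, absMul_one]
    · simp [h, absMul_neg, absMul_one]
  calc Equiv.Perm.sign (absMulHom s)
      = Equiv.Perm.sign (absMulHom s) ^ (p / 2) := by
        rw [Int.units_pow_eq_pow_mod_two, hodd, pow_one]
    _ = 1 := by rw [← map_pow, hpow, map_one]

end ZMod

namespace Matrix

variable {ι A R : Type*} [Fintype ι] [DecidableEq ι] [AddCommMonoid A] [Fintype A] [DecidableEq A]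
  [CommRing R]

def leibnizCoeff (f : ι → ι → A) (a : A) : ℤ :=
  ∑ σ : Equiv.Perm ι with ∑ i, f (σ i) i = a, (Equiv.Perm.sign σ : ℤ)

lemma det_of_addChar (ψ : AddChar A R) (f : ι → ι → A) :
    (of fun i j => ψ (f i j)).det = ∑ a, (leibnizCoeff f a : R) * ψ a := by
  simp only [det_apply', of_apply, ← ψ.map_sum_eq_prod, leibnizCoeff, Int.cast_sum, sum_mul]
  rw [← sum_fiberwise_of_maps_to (g := fun σ : Equiv.Perm ι => ∑ i, f (σ i) i)
    (t := univ) fun _ _ => mem_univ _]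
  refine sum_congr rfl fun a _ => sum_congr rfl fun σ hσ => ?_
  rw [(mem_filter.mp hσ).2]

end Matrix

lemma Rat.den_two_mul_intCast_div_two (z : ℤ) : (2 * ((z : ℚ) / 2)).den = 1 := by
  rw [mul_div_cancel₀ _ two_ne_zero, Rat.den_intCast]

def squareProduct (p : ℕ) (j k : Fin (p / 2 + 1)) : ZMod p :=
  ((j : ℕ) : ZMod p) ^ 2 * ((k : ℕ) : ZMod p) ^ 2

section SquareProduct

variable {p : ℕ} [Fact p.Prime]

lemma det_of_mulShift_sq_squareProduct {R : Type*} [CommRing R] (hp : p % 4 = 3)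
    (ψ : AddChar (ZMod p) R) (s : (ZMod p)ˣ) :
    (Matrix.of fun j k => ψ.mulShift ((s : ZMod p) ^ 2) (squareProduct p j k)).det =
      (Matrix.of fun j k => ψ (squareProduct p j k)).det := by
  have hrows : (Matrix.of fun j k => ψ.mulShift ((s : ZMod p) ^ 2) (squareProduct p j k)) =
      (Matrix.of fun j k => ψ (squareProduct p j k)).submatrix (ZMod.absMulHom s) id := by
    ext j k
    simp only [Matrix.of_apply, Matrix.submatrix_apply, id, AddChar.mulShift_apply, squareProduct,
      ZMod.absMulHom_apply]
    rcases ZMod.natCast_absMul (s : ZMod p) j with h | h <;> rw [h] <;> ring_nf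
  rw [hrows, Matrix.det_permute, ZMod.sign_absMulHom hp, Units.val_one, Int.cast_one, one_mul]

lemma exists_two_mul_det_squareProduct_eq {K : Type*} [Field K] [CharZero K] (hp : p % 4 = 3)
    {ψ : AddChar (ZMod p) K} (hψ : ψ.IsPrimitive) :
    ∃ x y : ℤ, 2 * (Matrix.of fun j k => ψ (squareProduct p j k)).det =
      x + y * gaussSum ((quadraticChar (ZMod p)).ringHomComp (Int.castRingHom K)) ψ := by
  have hinv (s a : ZMod p) (hs : s ≠ 0) :
      Matrix.leibnizCoeff (squareProduct p) (s ^ 2 * a) =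
        Matrix.leibnizCoeff (squareProduct p) a := by
    refine hψ.apply_mul_eq_of_sum_mulShift_eq _ (pow_ne_zero 2 hs) ?_ a
    rw [← Matrix.det_of_addChar, ← Matrix.det_of_addChar]
    exact det_of_mulShift_sq_squareProduct hp ψ (Units.mk0 s hs)
  rw [Matrix.det_of_addChar]
  refine exists_two_mul_sum_eq_add_mul_gaussSum ?_ (by simpa using hψ one_ne_zero) _ hinv
  rw [ZMod.ringChar_zmod_n]
  omega

end SquareProduct

/-- For a prime `p ≡ 3 (mod 4)`, there exist half-integers `u, v`
(i.e. `2u, 2v ∈ ℤ`) such that `det Dₚ = u + v·i·√p`, where `Dₚ = (ζ^(j²k²))` for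
`0 ≤ j,k ≤ (p-1)/2`. -/
theorem stmt9 (p : ℕ) [hp : Fact p.Prime] (hp4 : p % 4 = 3)
    (m : ℕ) (hm : m = (p - 1) / 2)
    (ζ : ℂ) (hζ : ζ = Complex.exp (2 * Real.pi * Complex.I / p))
    (D : Matrix (Fin (m + 1)) (Fin (m + 1)) ℂ)
    (hD : D = Matrix.of fun (j k : Fin (m + 1)) => ζ ^ ((j : ℕ) ^ 2 * (k : ℕ) ^ 2)) :
    ∃ u v : ℚ, (2 * u).den = 1 ∧ (2 * v).den = 1 ∧
      D.det = (u : ℂ) + (v : ℂ) * Complex.I * Real.sqrt p := by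
  obtain rfl : m = p / 2 := by omega
  have hζ' : IsPrimitiveRoot ζ p := hζ ▸ Complex.isPrimitiveRoot_exp p hp.out.ne_zero
  have hψ := AddChar.zmodChar_primitive_of_primitive_root p hζ'
  set ψ := AddChar.zmodChar p hζ'.pow_eq_one
  have hDψ : D = Matrix.of fun j k => ψ (squareProduct p j k) := by
    rw [hD]
    ext j k
    simp [ψ, squareProduct, ← AddChar.zmodChar_apply' hζ'.pow_eq_one]
  obtain ⟨x, y, hxy⟩ := exists_two_mul_det_squareProduct_eq hp4 hψ
  have hg := gaussSum_quadraticChar_sq_of_card_mod_four_eq_three (by rwa [ZMod.card]) hψ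
  rw [ZMod.card] at hg
  obtain ⟨e, he⟩ :=
    Complex.exists_intCast_mul_I_mul_sqrt_of_sq_eq_neg (Nat.cast_nonneg p) (by simpa using hg)
  refine ⟨(x : ℚ) / 2, ((y * e : ℤ) : ℚ) / 2, Rat.den_two_mul_intCast_div_two x,
    Rat.den_two_mul_intCast_div_two _, ?_⟩
  rw [hDψ]
  push_cast
  linear_combination hxy / 2 + y / 2 * he
end

section
/- Let p be an odd prime. Then det[D_p] = (-1)^m · (∏_{k=1}^{m} (1 - ζ_p^(k²))) · det[C_p]. -/
/-!
Subtracting the first row of `Dₚ` (all ones) from the others kills the first column below the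
corner, so `det Dₚ` is the determinant of the matrix `ζ^(j²k²) - 1` for `1 ≤ j, k ≤ m`. Since
`ζ^(j²) ≠ 1` for `0 < j < p`, row `j` of that matrix is `-(1 - ζ^(j²))` times row `j` of `Cₚ`.
-/

open Matrix

theorem Matrix.det_eq_det_sub_one_of_row_zero_of_col_zero {R : Type*} [CommRing R] {n : ℕ}
    (A : Matrix (Fin (n + 1)) (Fin (n + 1)) R) (hrow : ∀ j, A 0 j = 1) (hcol : ∀ i, A i 0 = 1) :
    A.det = (of fun i j : Fin n => A i.succ j.succ - 1).det := by
  set B : Matrix (Fin (n + 1)) (Fin (n + 1)) R :=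
    of fun i j => if i = 0 then 1 else A i j - 1 with hB
  have hAB : A.det = B.det :=
    det_eq_of_forall_row_eq_smul_add_const (fun i => if i = 0 then 0 else 1) 0 (by simp)
      fun i j => by by_cases hi : i = 0 <;> simp [hB, hi, hrow]
  rw [hAB, det_succ_column_zero, Finset.sum_eq_single 0]
  · simp [hB, submatrix, Fin.succ_ne_zero]
  · intro i _ hi
    simp [hB, hi, hcol]
  · simp

theorem IsPrimitiveRoot.pow_pow_ne_one {M : Type*} [CommMonoid M] {ζ : M} {p k : ℕ}
    (hζ : IsPrimitiveRoot ζ p) (hp : p.Prime) (hk : ¬p ∣ k) (n : ℕ) : ζ ^ (k ^ n) ≠ 1 :=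
  fun h => hk (hp.dvd_of_dvd_pow ((hζ.pow_eq_one_iff_dvd _).mp h))

theorem Fin.prod_univ_succ_eq_prod_Icc {M : Type*} [CommMonoid M] (m : ℕ) (f : ℕ → M) :
    ∏ i : Fin m, f (i + 1) = ∏ k ∈ Finset.Icc 1 m, f k := by
  rw [Fin.prod_univ_eq_prod_range (fun i => f (i + 1)), ← Finset.Ico_add_one_right_eq_Icc,
    ← Nat.Ico_zero_eq_range, Finset.prod_Ico_add']

theorem stmt11_general (p : ℕ) [hp : Fact p.Prime]
    (m : ℕ) (hm : m = (p - 1) / 2)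
    (ζ : ℂ) (hζ : ζ = Complex.exp (2 * Real.pi * Complex.I / p))
    (D : Matrix (Fin (m + 1)) (Fin (m + 1)) ℂ)
    (hD : D = Matrix.of fun (j k : Fin (m + 1)) => ζ ^ ((j : ℕ) ^ 2 * (k : ℕ) ^ 2))
    (C : Matrix (Fin m) (Fin m) ℂ)
    (hC : C = Matrix.of fun (j k : Fin m) =>
      (1 - ζ ^ (((j : ℕ) + 1) ^ 2 * ((k : ℕ) + 1) ^ 2)) / (1 - ζ ^ (((j : ℕ) + 1) ^ 2))) :
    D.det = (-1) ^ m * (∏ k ∈ Finset.Icc 1 m, (1 - ζ ^ (k ^ 2))) * C.det := by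
  have hζp : IsPrimitiveRoot ζ p := hζ ▸ Complex.isPrimitiveRoot_exp p hp.out.ne_zero
  have hne (i : Fin m) : 1 - ζ ^ (((i : ℕ) + 1) ^ 2) ≠ 0 := by
    have hi : ¬p ∣ (i : ℕ) + 1 := Nat.not_dvd_of_pos_of_lt (by omega) (by omega)
    exact sub_ne_zero.mpr (hζp.pow_pow_ne_one hp.out hi 2).symm
  have hrows : (of fun i j : Fin m => ζ ^ (((i : ℕ) + 1) ^ 2 * ((j : ℕ) + 1) ^ 2) - 1)
      = of fun i j : Fin m => -(1 - ζ ^ (((i : ℕ) + 1) ^ 2)) * C i j := by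
    ext i j
    simp only [of_apply, hC]
    field_simp [hne i]
    ring
  rw [hD, det_eq_det_sub_one_of_row_zero_of_col_zero _ (by simp) (by simp)]
  simp only [of_apply, Fin.val_succ]
  rw [hrows, det_mul_column, Finset.prod_neg, Finset.card_univ, Fintype.card_fin,
    Fin.prod_univ_succ_eq_prod_Icc m fun k => 1 - ζ ^ (k ^ 2)]

/-- For an odd prime `p` with `m = (p-1)/2`,
`det Dₚ = (-1)^m · (∏_{k=1}^{m} (1 - ζ^(k²))) · det Cₚ`. -/
theorem stmt11 (p : ℕ) [hp : Fact p.Prime] (hodd : Odd p)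
    (m : ℕ) (hm : m = (p - 1) / 2)
    (ζ : ℂ) (hζ : ζ = Complex.exp (2 * Real.pi * Complex.I / p))
    (D : Matrix (Fin (m + 1)) (Fin (m + 1)) ℂ)
    (hD : D = Matrix.of fun (j k : Fin (m + 1)) => ζ ^ ((j : ℕ) ^ 2 * (k : ℕ) ^ 2))
    (C : Matrix (Fin m) (Fin m) ℂ)
    (hC : C = Matrix.of fun (j k : Fin m) =>
      (1 - ζ ^ (((j : ℕ) + 1) ^ 2 * ((k : ℕ) + 1) ^ 2)) / (1 - ζ ^ (((j : ℕ) + 1) ^ 2))) :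
    D.det = (-1) ^ m * (∏ k ∈ Finset.Icc 1 m, (1 - ζ ^ (k ^ 2))) * C.det :=
  stmt11_general p (hp := hp) m hm ζ hζ D hD C hC
end
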